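/- arXiv:1102.4122 — 9 statements merged into one kernel-verified Lean document; each statement's English description precedes it below -/
import Mathlib

section
/- For each system S ⊆ E_n, the set of integer solutions of the system S̃ equals the set of integer solutions of S together with the zero tuple (0,...,0); that is, {(x_1,...,x_n) ∈ ℤ^n : (x_1,...,x_n) solves S̃} = {(x_1,...,x_n) ∈ ℤ^n : (x_1,...,x_n) solves S} ∪ {(0,...,0)}. -/
/-- A system of equations `S ⊆ E_n`: a set of equations of the forms
`x_i = 1`, `x_i + x_j = x_k`, `x_i * x_j = x_k` with `i, j, k ∈ {1, …, n}`. -/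
structure EqnSystem (n : ℕ) where
  ones : Set (Fin n)
  adds : Set (Fin n × Fin n × Fin n)
  muls : Set (Fin n × Fin n × Fin n)

/-- A tuple `x` solves the system `S` when it satisfies every equation of `S`. -/
def EqnSystem.Solves {n : ℕ} {R : Type*} [Add R] [Mul R] [One R]
    (S : EqnSystem n) (x : Fin n → R) : Prop :=
  (∀ i ∈ S.ones, x i = 1) ∧
  (∀ t ∈ S.adds, x t.1 + x t.2.1 = x t.2.2) ∧
  (∀ t ∈ S.muls, x t.1 * x t.2.1 = x t.2.2)

/-- The system `S̃`: each equation `x_i = 1` of `S` is removed and replaced by the `n`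
equations `x_i * x_1 = x_1`, …, `x_i * x_n = x_n`. -/
def EqnSystem.tilde {n : ℕ} (S : EqnSystem n) : EqnSystem n where
  ones := ∅
  adds := S.adds
  muls := S.muls ∪ {t : Fin n × Fin n × Fin n | t.1 ∈ S.ones ∧ t.2.1 = t.2.2}

/-- The integer solutions of `S̃` are exactly the integer solutions of `S` together with
the zero tuple. -/
theorem tilde_solutions {n : ℕ} (S : EqnSystem n) :
    {x : Fin n → ℤ | S.tilde.Solves x} =
      {x : Fin n → ℤ | S.Solves x} ∪ {fun _ => 0} := by
  ext x
  simp only [Set.mem_setOf_eq, Set.mem_union, Set.mem_singleton_iff]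
  constructor
  · rintro ⟨-, hadd, hmul⟩
    by_cases hz : ∀ j, x j = 0
    · right; funext j; exact hz j
    · left
      push_neg at hz
      obtain ⟨j, hj⟩ := hz
      refine ⟨?_, hadd, fun t ht => hmul t (Or.inl ht)⟩
      intro i hi
      have h := hmul (i, j, j) (Or.inr ⟨hi, rfl⟩)
      have h' : x i * x j = 1 * x j := by simpa using h
      exact mul_right_cancel₀ hj h'
  · rintro (⟨h1, hadd, hmul⟩ | rfl)
    · refine ⟨by simp [EqnSystem.tilde], hadd, ?_⟩
      rintro t (ht | ⟨hi, heq⟩)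
      · exact hmul t ht
      · rw [h1 t.1 hi, one_mul, heq]
    · exact ⟨by simp [EqnSystem.tilde], by simp, by rintro t (ht | ⟨hi, heq⟩) <;> simp⟩
end

section
/- For each positive integer n, the statement Φ_n holds if and only if the following holds: for every system S ⊆ E_n that has only finitely many integer solutions, every integer solution (x_1,...,x_n) of S satisfies |x_1| ≤ 2^(2^(n-1)), ..., |x_n| ≤ 2^(2^(n-1)). -/
/-- The statement `Φ_n`: for all integers `x_1, …, x_n` there exist integers
`y_1, …, y_n` such that (i) if `2^(2^(n-1)) < |x_1|` then `|x_1| < |y_i|` for some `i`;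
(ii) `x_i + x_j = x_k` implies `y_i + y_j = y_k`; (iii) `x_i · x_j = x_k` implies
`y_i · y_j = y_k`. (The first coordinate is the one of index `0`.) -/
def Phi (n : ℕ) : Prop :=
  ∀ x : Fin n → ℤ, ∃ y : Fin n → ℤ,
    (∀ i : Fin n, (i : ℕ) = 0 →
      (2 : ℤ) ^ 2 ^ (n - 1) < |x i| → ∃ j : Fin n, |x i| < |y j|) ∧
    (∀ i j k : Fin n, x i + x j = x k → y i + y j = y k) ∧
    (∀ i j k : Fin n, x i * x j = x k → y i * y j = y k)

def PreservesRelations {ι R R' : Type*} [Add R] [Mul R] [Add R'] [Mul R']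
    (x : ι → R) (y : ι → R') : Prop :=
  (∀ i j k, x i + x j = x k → y i + y j = y k) ∧
  (∀ i j k, x i * x j = x k → y i * y j = y k)

theorem PreservesRelations.rfl {ι R : Type*} [Add R] [Mul R] {x : ι → R} :
    PreservesRelations x x :=
  ⟨fun _ _ _ => id, fun _ _ _ => id⟩

theorem PreservesRelations.comp_equiv_symm {ι κ R R' : Type*} [Add R] [Mul R] [Add R']
    [Mul R'] {x : ι → R} {y : κ → R'} (σ : κ ≃ ι) (h : PreservesRelations (x ∘ σ) y) :
    PreservesRelations x (y ∘ σ.symm) := by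
  constructor <;> intro i j k hx
  · simpa using h.1 (σ.symm i) (σ.symm j) (σ.symm k) (by simpa using hx)
  · simpa using h.2 (σ.symm i) (σ.symm j) (σ.symm k) (by simpa using hx)

def EqnSystem.relationsOf {n : ℕ} {R : Type*} [Add R] [Mul R] (x : Fin n → R) :
    EqnSystem n where
  ones := ∅
  adds := {t | x t.1 + x t.2.1 = x t.2.2}
  muls := {t | x t.1 * x t.2.1 = x t.2.2}

theorem EqnSystem.solves_relationsOf_iff {n : ℕ} {R R' : Type*} [Add R] [Mul R] [Add R']
    [Mul R'] [One R'] {x : Fin n → R} {y : Fin n → R'} :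
    (relationsOf x).Solves y ↔ PreservesRelations x y :=
  ⟨fun h => ⟨fun i j k hx => h.2.1 (i, j, k) hx, fun i j k hx => h.2.2 (i, j, k) hx⟩,
    fun h => ⟨fun _ hi => absurd hi (Set.notMem_empty _), fun _ => h.1 _ _ _,
      fun _ => h.2 _ _ _⟩⟩

/-- A nonzero entry `y j` forces `y i = 1` wherever `z i = 1`, through `z i * z j = z j`. -/
theorem EqnSystem.Solves.of_preservesRelations {n : ℕ} {R R' : Type*} [MulOneClass R] [Add R]
    [MulZeroOneClass R'] [IsRightCancelMulZero R'] [Add R'] {S : EqnSystem n}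
    {z : Fin n → R} {y : Fin n → R'} (hz : S.Solves z) (hy : PreservesRelations z y)
    {j : Fin n} (hj : y j ≠ 0) : S.Solves y := by
  refine ⟨fun i hi => ?_, fun t ht => hy.1 _ _ _ (hz.2.1 t ht),
    fun t ht => hy.2 _ _ _ (hz.2.2 t ht)⟩
  have hyij : y i * y j = y j := hy.2 i j j (by rw [hz.1 i hi, one_mul])
  exact mul_right_cancel₀ hj (by rw [hyij, one_mul])

theorem Phi.exists_preservesRelations_abs_lt {n : ℕ} (hΦ : Phi n) (x : Fin n → ℤ) (k : Fin n)
    (hk : (2 : ℤ) ^ 2 ^ (n - 1) < |x k|) :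
    ∃ y : Fin n → ℤ, PreservesRelations x y ∧ ∃ j, |x k| < |y j| := by
  let σ := Equiv.swap ⟨0, k.pos⟩ k
  have hσ : x (σ ⟨0, k.pos⟩) = x k := by simp [σ]
  obtain ⟨y, hbig, hadd, hmul⟩ := hΦ (x ∘ σ)
  obtain ⟨j, hj⟩ := hbig ⟨0, k.pos⟩ rfl (by simpa [hσ] using hk)
  exact ⟨y ∘ σ.symm, PreservesRelations.comp_equiv_symm σ ⟨hadd, hmul⟩, σ j,
    by simpa [hσ] using hj⟩

theorem Set.Infinite.exists_abs_lt {ι : Type*} [Finite ι] {s : Set (ι → ℤ)} (hs : s.Infinite)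
    (C : ℤ) : ∃ y ∈ s, ∃ j, C < |y j| := by
  by_contra! hbounded
  exact hs ((Set.Finite.pi' fun _ => Set.finite_Icc (-C) C).subset
    fun y hy j => abs_le.mp (hbounded y hy j))

theorem phi_iff_finite_solution_bound_general (n : ℕ) :
    Phi n ↔
      ∀ S : EqnSystem n, {x : Fin n → ℤ | S.Solves x}.Finite →
        ∀ x : Fin n → ℤ, S.Solves x → ∀ i : Fin n, |x i| ≤ (2 : ℤ) ^ 2 ^ (n - 1) := by
  constructor
  · intro hΦ S hfin x hx i
    by_contra! hbig
    obtain ⟨⟨z, k⟩, ⟨hz, -⟩, hmax⟩ := Set.exists_max_image _ (fun p => |p.1 p.2|)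
      (hfin.prod Set.finite_univ) ⟨(x, i), hx, trivial⟩
    have hzk : |x i| ≤ |z k| := hmax (x, i) ⟨hx, trivial⟩
    obtain ⟨y, hrel, j, hj⟩ := hΦ.exists_preservesRelations_abs_lt z k (hbig.trans_le hzk)
    have hy : S.Solves y :=
      hz.of_preservesRelations hrel (abs_pos.mp ((abs_nonneg _).trans_lt hj))
    exact (hmax (y, j) ⟨hy, trivial⟩).not_gt hj
  · intro hbound x
    by_cases hfin : {y : Fin n → ℤ | (EqnSystem.relationsOf x).Solves y}.Finite
    · refine ⟨x, fun i _ hi => ?_, PreservesRelations.rfl⟩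
      have hx := EqnSystem.solves_relationsOf_iff.mpr (PreservesRelations.rfl (x := x))
      exact absurd (hbound _ hfin x hx i) hi.not_ge
    · obtain ⟨y, hy, j, hj⟩ := Set.Infinite.exists_abs_lt hfin (∑ i, |x i|)
      refine ⟨y, fun i _ _ => ⟨j, lt_of_le_of_lt ?_ hj⟩,
        EqnSystem.solves_relationsOf_iff.mp hy⟩
      exact Finset.single_le_sum (fun i _ => abs_nonneg (x i)) (Finset.mem_univ i)

/-- `Φ_n` holds if and only if every system `S ⊆ E_n` with only finitely many integer
solutions has all its integer solutions in the box `[-2^(2^(n-1)), 2^(2^(n-1))]^n`. -/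
theorem phi_iff_finite_solution_bound (n : ℕ) (hn : 0 < n) :
    Phi n ↔
      ∀ S : EqnSystem n, {x : Fin n → ℤ | S.Solves x}.Finite →
        ∀ x : Fin n → ℤ, S.Solves x → ∀ i : Fin n, |x i| ≤ (2 : ℤ) ^ 2 ^ (n - 1) :=
  phi_iff_finite_solution_bound_general n
end

section
/- In the domain of positive integers, all solutions of the equation x² − 5y² = −1 are given by x + y√5 = (2 + √5)^(2k+1) where k ranges over the non-negative integers; that is, a pair (x, y) of positive integers satisfies x² − 5y² = −1 if and only if there exists a non-negative integer k with x + y√5 = (2 + √5)^(2k+1). -/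
/-!
`2 + √5` is a unit of norm `-1` whose square `9 + 4√5` is the fundamental solution of
`x² - 5y² = 1`. Dividing a positive solution `x + y√5` of `x² - 5y² = -1` by `2 + √5` gives
`(5y - 2x) + (x - 2y)√5`, a solution of `x² - 5y² = 1` with non-negative coordinates, hence a
power of `9 + 4√5`. Conversely, odd powers of `2 + √5` have norm `(-1)^(2k+1) = -1`.
-/

open Pell Zsqrtd

lemma five_ne_mul_self (m : ℤ) : (5 : ℤ) ≠ m * m := by
  intro hm
  have : m ≤ 2 := by nlinarith
  have : -2 ≤ m := by nlinarith
  interval_cases m <;> omega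

lemma Zsqrtd.toReal_mk {d : ℤ} (h : 0 ≤ d) (x y : ℤ) :
    toReal h ⟨x, y⟩ = x + y * √d := by
  simp [toReal_apply]

lemma Zsqrtd.norm_pow {d : ℤ} (a : ℤ√d) (n : ℕ) : (a ^ n).norm = a.norm ^ n :=
  map_pow normMonoidHom a n

lemma add_mul_sqrt_five_eq_pow_iff (x y : ℤ) (n : ℕ) :
    (x : ℝ) + y * √5 = (2 + √5) ^ n ↔ (⟨x, y⟩ : ℤ√5) = ⟨2, 1⟩ ^ n := by
  have h5 : (0 : ℤ) ≤ 5 := by norm_num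
  rw [← (toReal_injective h5 five_ne_mul_self).eq_iff, map_pow, toReal_mk, toReal_mk]
  norm_num

lemma isFundamental_nine_add_four_sqrt_five :
    IsFundamental (Solution₁.mk 9 4 (by norm_num) : Solution₁ 5) := by
  refine ⟨by simp, by simp, fun {b} hb => ?_⟩
  have hb' : b.x ^ 2 - 5 * b.y ^ 2 = 1 := b.prop
  rw [Solution₁.x_mk]
  by_contra! hlt
  generalize b.x = x at *
  generalize b.y = y at *
  have : y < 4 := by nlinarith
  have : -4 < y := by nlinarith
  interval_cases x <;> interval_cases y <;> omega

lemma exists_eq_two_add_sqrt_five_pow_odd {x y : ℤ} (hx : 0 < x) (hy : 0 < y)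
    (h : x ^ 2 - 5 * y ^ 2 = -1) : ∃ k : ℕ, (⟨x, y⟩ : ℤ√5) = ⟨2, 1⟩ ^ (2 * k + 1) := by
  let β : Solution₁ 5 := Solution₁.mk (5 * y - 2 * x) (x - 2 * y) (by linear_combination -h)
  have hβx : 0 < β.x := by simp only [β, Solution₁.x_mk]; nlinarith
  have hβy : 0 ≤ β.y := by simp only [β, Solution₁.y_mk]; nlinarith
  obtain ⟨k, hk⟩ := isFundamental_nine_add_four_sqrt_five.eq_pow_of_nonneg hβx hβy
  have hk' : (⟨5 * y - 2 * x, x - 2 * y⟩ : ℤ√5) = ⟨9, 4⟩ ^ k :=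
    (congrArg Subtype.val hk).trans (SubmonoidClass.coe_pow (S := unitary (ℤ√5)) _ k)
  have hsq : (⟨9, 4⟩ : ℤ√5) = ⟨2, 1⟩ ^ 2 := by decide
  refine ⟨k, ?_⟩
  calc (⟨x, y⟩ : ℤ√5) = ⟨5 * y - 2 * x, x - 2 * y⟩ * ⟨2, 1⟩ := by ext <;> simp <;> ring
    _ = (⟨2, 1⟩ ^ 2) ^ k * ⟨2, 1⟩ := by rw [hk', hsq]
    _ = ⟨2, 1⟩ ^ (2 * k + 1) := by rw [← pow_mul, ← pow_succ]

/-- In the domain of positive integers, all solutions of `x² - 5y² = -1` are given by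
`x + y√5 = (2 + √5)^(2k+1)` where `k` ranges over the non-negative integers. -/
theorem pell_neg_five_solutions (x y : ℤ) (hx : 0 < x) (hy : 0 < y) :
    x ^ 2 - 5 * y ^ 2 = -1 ↔
      ∃ k : ℕ, (x : ℝ) + (y : ℝ) * Real.sqrt 5 = (2 + Real.sqrt 5) ^ (2 * k + 1) := by
  simp_rw [add_mul_sqrt_five_eq_pow_iff]
  constructor
  · exact exists_eq_two_add_sqrt_five_pow_odd hx hy
  · rintro ⟨k, hk⟩
    have hu : (⟨2, 1⟩ : ℤ√5).norm = -1 := rfl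
    have hnorm : (⟨x, y⟩ : ℤ√5).norm = -1 := by
      rw [hk, norm_pow, hu, Odd.neg_one_pow ⟨k, rfl⟩]
    rw [norm_def] at hnorm
    linear_combination hnorm
end

section
/- Define sequences of integers by a_0 = 2, b_0 = 1 and a_{k+1} = 9·a_k + 20·b_k, b_{k+1} = 4·a_k + 9·b_k for k ≥ 0. Then a pair (x, y) of positive integers satisfies x² − 5y² = −1 if and only if (x, y) = (a_k, b_k) for some non-negative integer k. -/
/-- The recursively defined sequence of pairs: `(a_0, b_0) = (2, 1)` and
`(a_{k+1}, b_{k+1}) = (9·a_k + 20·b_k, 4·a_k + 9·b_k)`. -/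
def pellSeq : ℕ → ℤ × ℤ
  | 0 => (2, 1)
  | k + 1 => (9 * (pellSeq k).1 + 20 * (pellSeq k).2,
              4 * (pellSeq k).1 + 9 * (pellSeq k).2)

lemma pellSeq_eq (k : ℕ) : (pellSeq k).1 ^ 2 - 5 * (pellSeq k).2 ^ 2 = -1 := by
  induction k with
  | zero => simp [pellSeq]
  | succ n ih =>
    simp only [pellSeq]
    nlinarith [ih]

lemma pell_descent : ∀ n : ℕ, ∀ x y : ℤ, 0 < x → 0 < y → y.toNat ≤ n →
    x ^ 2 - 5 * y ^ 2 = -1 → ∃ k : ℕ, (x, y) = pellSeq k := by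
  intro n
  induction n with
  | zero => intro x y hx hy hn _; omega
  | succ n ih =>
    intro x y hx hy hn heq
    by_cases hy1 : y = 1
    · subst hy1
      have hx2 : x = 2 := by nlinarith [sq_nonneg (x - 2), sq_nonneg (x + 2)]
      exact ⟨0, by simp [hx2, pellSeq]⟩
    · have hy2 : 2 ≤ y := by omega
      have hy5 : 5 ≤ y := by
        by_contra h
        push_neg at h
        have hxb : x ≤ 9 := by nlinarith
        interval_cases y <;> interval_cases x <;> omega
      set x' := 9 * x - 20 * y with hx'
      set y' := 9 * y - 4 * x with hy'
      have heq' : x' ^ 2 - 5 * y' ^ 2 = -1 := by rw [hx', hy']; nlinarith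
      have hxp : 0 < x' := by nlinarith
      have hyp : 0 < y' := by nlinarith
      have hlt : y' < y := by nlinarith
      obtain ⟨k, hk⟩ := ih x' y' hxp hyp (by omega) heq'
      refine ⟨k + 1, ?_⟩
      have h1 : (pellSeq k).1 = x' := by rw [← hk]
      have h2 : (pellSeq k).2 = y' := by rw [← hk]
      simp only [pellSeq, h1, h2, hx', hy', Prod.mk.injEq]
      constructor <;> ring

/-- A pair `(x, y)` of positive integers solves `x² - 5y² = -1` if and only if
`(x, y) = (a_k, b_k)` for some non-negative integer `k`, where `a_0 = 2`, `b_0 = 1`,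
`a_{k+1} = 9·a_k + 20·b_k` and `b_{k+1} = 4·a_k + 9·b_k`. -/
theorem pell_neg_five_all_solutions (x y : ℤ) (hx : 0 < x) (hy : 0 < y) :
    x ^ 2 - 5 * y ^ 2 = -1 ↔ ∃ k : ℕ, (x, y) = pellSeq k := by
  constructor
  · intro h
    exact pell_descent y.toNat x y hx hy le_rfl h
  · rintro ⟨k, hk⟩
    have h1 : x = (pellSeq k).1 := by rw [← hk]
    have h2 : y = (pellSeq k).2 := by rw [← hk]
    rw [h1, h2]
    exact pellSeq_eq k
end

section
/- For all positive integers n, m with n ≤ m, if the statement Φ_n fails for a tuple (x_1,...,x_n) ∈ ℤ^n and 2^(2^(m-1)) < |x_1| ≤ 2^(2^m), then the statement Φ_m fails for the tuple (x_1,...,x_1,x_2,...,x_n) ∈ ℤ^m in which x_1 is repeated m − n + 1 times. -/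
/-- `PhiAt n x` says that the statement `Φ_n` holds for the particular tuple
`x = (x_1, …, x_n)`: there exist integers `y_1, …, y_n` with (i) if
`2^(2^(n-1)) < |x_1|` then `|x_1| < |y_i|` for some `i`; (ii) `x_i + x_j = x_k` implies
`y_i + y_j = y_k`; (iii) `x_i · x_j = x_k` implies `y_i · y_j = y_k`.
(The first coordinate is the one of index `0`.) -/
def PhiAt (n : ℕ) (x : Fin n → ℤ) : Prop :=
  ∃ y : Fin n → ℤ,
    (∀ i : Fin n, (i : ℕ) = 0 →
      (2 : ℤ) ^ 2 ^ (n - 1) < |x i| → ∃ j : Fin n, |x i| < |y j|) ∧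
    (∀ i j k : Fin n, x i + x j = x k → y i + y j = y k) ∧
    (∀ i j k : Fin n, x i * x j = x k → y i * y j = y k)

/-- If `Φ_n` fails for `(x_1, …, x_n) ∈ ℤⁿ` with `n ≤ m` and
`2^(2^(m-1)) < |x_1| ≤ 2^(2^m)`, then `Φ_m` fails for the tuple
`(x_1, …, x_1, x_2, …, x_n) ∈ ℤᵐ` in which `x_1` is repeated `m - n + 1` times. -/
theorem phi_fails_for_padded_tuple (n m : ℕ) (hn : 0 < n) (hnm : n ≤ m)
    (x : Fin n → ℤ) (hfail : ¬ PhiAt n x)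
    (hlb : (2 : ℤ) ^ 2 ^ (m - 1) < |x ⟨0, hn⟩|)
    (hub : |x ⟨0, hn⟩| ≤ (2 : ℤ) ^ 2 ^ m) :
    ¬ PhiAt m (fun i : Fin m =>
      if (i : ℕ) < m - n + 1 then x ⟨0, hn⟩
      else x ⟨(i : ℕ) - (m - n), by have := i.isLt; omega⟩) := by
  classical
  have hm : 0 < m := lt_of_lt_of_le hn hnm
  rintro ⟨y, h1, h2, h3⟩
  apply hfail
  have hpad0 : (2 : ℤ) ^ 2 ^ (m - 1) <
      |(fun i : Fin m =>
        if (i : ℕ) < m - n + 1 then x ⟨0, hn⟩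
        else x ⟨(i : ℕ) - (m - n), by have := i.isLt; omega⟩) ⟨0, hm⟩| := by
    simpa using hlb
  obtain ⟨j₀, hj₀⟩ := h1 ⟨0, hm⟩ rfl hpad0
  have hj₀' : |x ⟨0, hn⟩| < |y j₀| := by simpa using hj₀
  set c : ℕ := if (j₀ : ℕ) < m - n + 1 then (j₀ : ℕ) else 0 with hc
  have hclt : c < m - n + 1 := by
    simp only [hc]; split <;> omega
  have hcm : c < m := by omega
  let e : Fin n → Fin m := fun i =>
    if (i : ℕ) = 0 then ⟨c, hcm⟩
    else ⟨(i : ℕ) + (m - n), by have := i.isLt; omega⟩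
  have hpe : ∀ i : Fin n,
      (fun i : Fin m =>
        if (i : ℕ) < m - n + 1 then x ⟨0, hn⟩
        else x ⟨(i : ℕ) - (m - n), by have := i.isLt; omega⟩) (e i) = x i := by
    intro i
    by_cases h : (i : ℕ) = 0
    · have hi : i = ⟨0, hn⟩ := Fin.ext h
      simp only [e, h, if_pos, hi]
      simp [hclt]
    · have h1i : 1 ≤ (i : ℕ) := Nat.one_le_iff_ne_zero.mpr h
      simp only [e, h, if_neg, if_false]
      have : ¬ ((i : ℕ) + (m - n) < m - n + 1) := by omega
      simp only [this, if_false]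
      congr 1
      exact Fin.ext (by simp)
  refine ⟨fun i => y (e i), ?_, ?_, ?_⟩
  · intro i hi0 _
    by_cases h : (j₀ : ℕ) < m - n + 1
    · refine ⟨i, ?_⟩
      have hei : e i = j₀ := by
        simp only [e, hi0, if_pos]
        exact Fin.ext (by simp [hc, h])
      have hxi : x i = x ⟨0, hn⟩ := by congr 1; exact Fin.ext hi0
      show |x i| < |y (e i)|
      rw [hei, hxi]; exact hj₀'
    · have hk : (j₀ : ℕ) - (m - n) < n := by have := j₀.isLt; omega
      refine ⟨⟨(j₀ : ℕ) - (m - n), hk⟩, ?_⟩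
      have hne : ¬ ((j₀ : ℕ) - (m - n) = 0) := by omega
      have hei : e ⟨(j₀ : ℕ) - (m - n), hk⟩ = j₀ := by
        simp only [e, hne, if_false]
        exact Fin.ext (by simp; omega)
      have hxi : x i = x ⟨0, hn⟩ := by congr 1; exact Fin.ext hi0
      show |x i| < |y (e ⟨(j₀ : ℕ) - (m - n), hk⟩)|
      rw [hei, hxi]; exact hj₀'
  · intro i j k hadd
    exact h2 (e i) (e j) (e k) (by rw [hpe, hpe, hpe]; exact hadd)
  · intro i j k hmul
    exact h3 (e i) (e j) (e k) (by rw [hpe, hpe, hpe]; exact hmul)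
end

section
/- The statement 'for all positive integers n, Φ_n holds' is equivalent to the statement 'for all positive integers n, Ψ_n holds'. -/
/-- The statement `Ψ_n`: like `Φ_n` but with the strengthened hypothesis
`2^(2^(n-1)) < |x_1| = max(|x_1|, …, |x_n|) ≤ 2^(2^n)` in condition (i). -/
def Psi (n : ℕ) : Prop :=
  ∀ x : Fin n → ℤ, ∃ y : Fin n → ℤ,
    (∀ i : Fin n, (i : ℕ) = 0 →
      ((2 : ℤ) ^ 2 ^ (n - 1) < |x i| ∧ (∀ j : Fin n, |x j| ≤ |x i|) ∧
        |x i| ≤ (2 : ℤ) ^ 2 ^ n) →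
      ∃ j : Fin n, |x i| < |y j|) ∧
    (∀ i j k : Fin n, x i + x j = x k → y i + y j = y k) ∧
    (∀ i j k : Fin n, x i * x j = x k → y i * y j = y k)

/-!
`Φ_n` trivially implies `Ψ_n`. Conversely, let `x` be an `n`-tuple with `2^(2^(n-1)) < |x_1|`
and let `M = |x_{i₀}|` be the largest entry. Then `2^(2^n) < M²`, so there is `t ≥ n` with
`2^(2^t) < M² ≤ 2^(2^(t+1))`. The tuple `(x_{i₀}², x_1, …, x_n, 0, …, 0)` of length `t + 1`
satisfies the hypothesis of `Ψ_{t+1}`; a solution `y'` of it restricts to a solution of `x`, and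
the entry of `y'` exceeding `M²` yields an entry exceeding `M`: for the first entry because
`y'_1 = y'_{i₀+1}²`, and the padding entries are forced to be `0`.
-/

def RespectsRelations {ι : Type*} (x y : ι → ℤ) : Prop :=
  (∀ i j k, x i + x j = x k → y i + y j = y k) ∧ (∀ i j k, x i * x j = x k → y i * y j = y k)

namespace RespectsRelations

variable {ι κ : Type*}

theorem refl (x : ι → ℤ) : RespectsRelations x x :=
  ⟨fun _ _ _ h => h, fun _ _ _ h => h⟩

theorem comp {x y : κ → ℤ} (h : RespectsRelations x y) (f : ι → κ) :
    RespectsRelations (x ∘ f) (y ∘ f) :=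
  ⟨fun i j k => h.1 (f i) (f j) (f k), fun i j k => h.2 (f i) (f j) (f k)⟩

theorem eq_zero {x y : ι → ℤ} (h : RespectsRelations x y) {k : ι} (hk : x k = 0) : y k = 0 := by
  have := h.1 k k k (by rw [hk, add_zero])
  omega

theorem eq_sq {x y : ι → ℤ} (h : RespectsRelations x y) {i k : ι} (hk : x k = x i ^ 2) :
    y k = y i ^ 2 := by
  rw [sq, h.2 i i k (by rw [hk, sq])]

end RespectsRelations

theorem doubleExp_monotone : Monotone fun t : ℕ => (2 : ℤ) ^ 2 ^ t :=
  fun _ _ h => pow_le_pow_right₀ one_le_two (Nat.pow_le_pow_right two_pos h)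

theorem doubleExp_lt_sq {n : ℕ} {a : ℤ} (hn : 0 < n) (ha : 2 ^ 2 ^ (n - 1) < a) :
    2 ^ 2 ^ n < a ^ 2 := by
  obtain ⟨m, rfl⟩ := Nat.exists_eq_add_one_of_ne_zero hn.ne'
  rw [Nat.add_sub_cancel] at ha
  rw [pow_succ, pow_mul]
  exact pow_lt_pow_left₀ ha (by positivity) two_ne_zero

theorem exists_doubleExp_bracket {n : ℕ} {N : ℤ} (hN : 2 ^ 2 ^ n < N) :
    ∃ t, n ≤ t ∧ 2 ^ 2 ^ t < N ∧ N ≤ 2 ^ 2 ^ (t + 1) := by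
  classical
  have hex : ∃ t, N ≤ 2 ^ 2 ^ (t + 1) := by
    have : N.toNat < 2 ^ 2 ^ (N.toNat + 1) :=
      (Nat.lt_succ_self _).trans (Nat.lt_two_pow_self.trans Nat.lt_two_pow_self)
    exact ⟨N.toNat, N.self_le_toNat.trans (by exact_mod_cast this.le)⟩
  refine ⟨Nat.find hex, ?_, ?_, Nat.find_spec hex⟩
  · by_contra! h
    exact ((Nat.find_spec hex).trans (doubleExp_monotone h)).not_gt hN
  · match ht : Nat.find hex with
    | 0 => exact (doubleExp_monotone (Nat.zero_le n)).trans_lt hN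
    | t + 1 => exact not_le.mp (Nat.find_min hex (ht ▸ Nat.lt_succ_self t))

def consPad {n : ℕ} (c : ℤ) (x : Fin n → ℤ) (t : ℕ) : Fin (t + 1) → ℤ :=
  Fin.cons c fun j => if h : (j : ℕ) < n then x ⟨j, h⟩ else 0

section consPad

variable {n t : ℕ} (c : ℤ) (x : Fin n → ℤ)

@[simp] theorem consPad_zero : consPad c x t 0 = c := rfl

theorem consPad_castLE_succ (hnt : n ≤ t) (i : Fin n) :
    consPad c x t (Fin.castLE hnt i).succ = x i := by
  simp [consPad]

theorem consPad_succ_of_le {j : Fin t} (hj : n ≤ j) : consPad c x t j.succ = 0 := by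
  simp [consPad, hj.not_gt]

theorem abs_consPad_le {i₀ : Fin n} (hmax : ∀ i, |x i| ≤ |x i₀|) (j : Fin (t + 1)) :
    |consPad (x i₀ ^ 2) x t j| ≤ x i₀ ^ 2 := by
  refine Fin.cases (by simp) (fun j => ?_) j
  simp only [consPad, Fin.cons_succ]
  split_ifs
  · exact (hmax _).trans (sq_abs (x i₀) ▸ Int.le_self_sq _)
  · simp [sq_nonneg]

end consPad

theorem exists_respectsRelations_abs_lt_of_psi {n t : ℕ} (hnt : n ≤ t) (hpsi : Psi (t + 1))
    (x : Fin n → ℤ) {i₀ : Fin n} (hmax : ∀ i, |x i| ≤ |x i₀|)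
    (hlow : 2 ^ 2 ^ t < x i₀ ^ 2) (hup : x i₀ ^ 2 ≤ 2 ^ 2 ^ (t + 1)) :
    ∃ y, RespectsRelations x y ∧ ∃ i, |x i₀| < |y i| := by
  set x' := consPad (x i₀ ^ 2) x t
  set e : Fin n → Fin (t + 1) := fun i => (Fin.castLE hnt i).succ
  have hxe : x' ∘ e = x := funext (consPad_castLE_succ _ x hnt)
  have habs0 : |x' 0| = x i₀ ^ 2 := by simp [x']
  obtain ⟨y, hbig, hrel⟩ := hpsi x'
  obtain ⟨j, hj⟩ := hbig 0 rfl
    ⟨by simpa [habs0] using hlow, fun j => habs0 ▸ abs_consPad_le x hmax j, habs0 ▸ hup⟩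
  rw [habs0] at hj
  refine ⟨y ∘ e, hxe ▸ RespectsRelations.comp hrel e, ?_⟩
  induction j using Fin.cases with
  | zero =>
    have hy0 : y 0 = y (e i₀) ^ 2 :=
      RespectsRelations.eq_sq hrel (by simp only [x', e, consPad_zero, consPad_castLE_succ])
    rw [hy0, abs_pow, ← sq_abs (x i₀)] at hj
    exact ⟨i₀, lt_of_pow_lt_pow_left₀ 2 (abs_nonneg _) hj⟩
  | succ j =>
    by_cases hjn : (j : ℕ) < n
    · exact ⟨⟨j, hjn⟩, (sq_abs (x i₀) ▸ Int.le_self_sq |x i₀|).trans_lt hj⟩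
    · rw [RespectsRelations.eq_zero hrel (consPad_succ_of_le _ x (not_lt.mp hjn)), abs_zero] at hj
      exact absurd hj (sq_nonneg _).not_gt

theorem phi_of_forall_psi {n : ℕ} (hn : 0 < n) (hpsi : ∀ m, 0 < m → Psi m) : Phi n := by
  intro x
  by_cases hbig : 2 ^ 2 ^ (n - 1) < |x ⟨0, hn⟩|
  · have : Nonempty (Fin n) := ⟨⟨0, hn⟩⟩
    obtain ⟨i₀, hmax⟩ := Finite.exists_max fun i => |x i|
    obtain ⟨t, hnt, hlow, hup⟩ :=
      exists_doubleExp_bracket (sq_abs (x i₀) ▸ doubleExp_lt_sq hn (hbig.trans_le (hmax _)))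
    obtain ⟨y, hy, i, hi⟩ :=
      exists_respectsRelations_abs_lt_of_psi hnt (hpsi _ t.succ_pos) x hmax hlow hup
    exact ⟨y, fun j _ _ => ⟨i, (hmax j).trans_lt hi⟩, hy⟩
  · refine ⟨x, fun i hi hlt => absurd ?_ hbig, RespectsRelations.refl x⟩
    rwa [show i = ⟨0, hn⟩ from Fin.ext hi] at hlt

/-- `Φ_n` holds for all positive integers `n` if and only if `Ψ_n` holds for all
positive integers `n`. -/
theorem phi_forall_iff_psi_forall :
    (∀ n : ℕ, 0 < n → Phi n) ↔ (∀ n : ℕ, 0 < n → Psi n) :=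
  ⟨fun hphi n hn x =>
    let ⟨y, hbig, hrel⟩ := hphi n hn x
    ⟨y, fun i hi h => hbig i hi h.1, hrel⟩,
   fun hpsi _ hn => phi_of_forall_psi hn hpsi⟩
end

section
/- Let n ≥ 2 and let (x_1,...,x_n) = (2^(2^(n-2)), 2^(2^(n-3)), ..., 16, 4, 2, 1), i.e. x_i = 2^(2^(n-1-i)) for i ∈ {1,...,n-1} and x_n = 1. If integers y_1,...,y_n satisfy: (i) for each i ∈ {1,...,n}, x_i = 1 implies y_i = 1; (ii) for all i,j,k ∈ {1,...,n}, x_i + x_j = x_k implies y_i + y_j = y_k; (iii) for all i,j,k ∈ {1,...,n}, x_i · x_j = x_k implies y_i · y_j = y_k; then x_1 = y_1. -/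
set_option maxHeartbeats 4000000

/-- For `n ≥ 2` and the tuple `(x_1, …, x_n) = (2^(2^(n-2)), 2^(2^(n-3)), …, 4, 2, 1)`,
i.e. `x_i = 2^(2^(n-1-i))` for `i < n` and `x_n = 1`, any integers `y_1, …, y_n`
preserving the unit, additive and multiplicative relations among the `x_i` satisfy
`y_1 = x_1`. (Index `i : Fin n` corresponds to `x_{i+1}`.) -/
theorem rigid_doubling_tuple_with_one (n : ℕ) (hn : 2 ≤ n) (x y : Fin n → ℤ)
    (hx : ∀ i : Fin n, x i = if (i : ℕ) = n - 1 then 1 else 2 ^ 2 ^ (n - 2 - (i : ℕ)))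
    (hone : ∀ i : Fin n, x i = 1 → y i = 1)
    (hadd : ∀ i j k : Fin n, x i + x j = x k → y i + y j = y k)
    (hmul : ∀ i j k : Fin n, x i * x j = x k → y i * y j = y k) :
    ∀ i : Fin n, (i : ℕ) = 0 → x i = y i := by
  have hxval : ∀ (a : ℕ) (h : a < n), a ≠ n - 1 → x ⟨a, h⟩ = 2 ^ 2 ^ (n - 2 - a) := by
    intro a h ha
    rw [hx]
    exact if_neg ha
  have hxm : ∀ (m : ℕ) (hm : m ≤ n - 2), x ⟨n - 2 - m, by omega⟩ = 2 ^ 2 ^ m := by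
    intro m hm
    rw [hxval _ _ (by omega)]
    have e : n - 2 - (n - 2 - m) = m := by omega
    rw [e]
  have key : ∀ m : ℕ, m ≤ n - 2 → x ⟨n - 2 - m, by omega⟩ = y ⟨n - 2 - m, by omega⟩ := by
    intro m
    induction m with
    | zero =>
      intro hm
      have hx1 : x ⟨n - 1, by omega⟩ = 1 := by rw [hx]; simp
      have hy1 : y ⟨n - 1, by omega⟩ = 1 := hone _ hx1
      have hx0 : x ⟨n - 2 - 0, by omega⟩ = 2 := by
        rw [hxm 0 hm]; norm_num
      have hsum : x ⟨n - 1, by omega⟩ + x ⟨n - 1, by omega⟩ = x ⟨n - 2 - 0, by omega⟩ := by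
        linarith [hx1, hx0]
      have h := hadd _ _ _ hsum
      rw [hy1] at h
      rw [hx0, ← h]; norm_num
    | succ m ih =>
      intro hm
      have ihv := ih (by omega)
      have hprod : x ⟨n - 2 - m, by omega⟩ * x ⟨n - 2 - m, by omega⟩
          = x ⟨n - 2 - (m + 1), by omega⟩ := by
        rw [hxm m (by omega), hxm (m + 1) hm, ← pow_add, ← two_mul, ← pow_succ']
      have h := hmul _ _ _ hprod
      rw [← ihv] at h
      rw [← h, hprod]
  intro i hi
  have h0 : i = ⟨n - 2 - (n - 2), by omega⟩ := by
    apply Fin.ext; simp [hi]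
  rw [h0]
  exact key (n - 2) le_rfl
end

section
/- The equation x² − 5⁹·y² = −1 has infinitely many solutions in integers x, y; equivalently, the set {(x, y) ∈ ℤ² : x² − 5⁹·y² = −1} is infinite. -/
def pX0 : ℤ := 35546387673220355224605029354189959200123850043863613894039953071505873290389075336629704210005786373611872375491907895160592041915261437793926445248985577854114424577017782380208566116251823242281973979417975738776667690627007370458747687034986992512202669097298935841343028486213880450525131317362170833721203237563835488450166530232697826302369637451943144334686198408333958870444242467682
def pY0 : ℤ := 25434924541402014427502573806451937460491244155110018622128462461812533900133570155330106229343063841269497150926474211943665187156108106414315331203263771697022562834950650907421389596094650408697077011410692772956686470030557675692512919549405482320270952958339940282826057168452835512083166513744667063396488269305319950770403315208476502355605558213407775959568835771734173813326484561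
def pU : ℤ := 2527091353229744038816422559768345932314829989321215942282586497825732273737134901296833931838070868566453959339173795133292835734596262841325516103099453371004235517732796787529318765372504760287667027873912252805495254437573659509623912020316738202028164522034695858356082962789172363358104325010246747697274552137450739670647858150699252098252479339111614151308177397285946264794175420200237874562148118838954910855738899683453442579358714336229099472154066879048674302572130788015724095570209585724886352298521777809579795030197551879479620557145223482486509438093265804551918342247451172802875085327028757850011283608913663024208113426187146795470599723404337169386738891431273056837241386266678888513426309185006785653212637646369923928762152445806308051471071697544385628906249
def pV : ℤ := 1808239376375564924586556511723628407977471814413177475662389880464151132724367997122354065245395660481768492711850474447077088632449132668022926676887643037919772997389870682224314993053880801843718004193860926552452294905833043246988561571756795839834508570516537615015937098817358270608123412694490401696696648973459562500190436368552355683317177077806674662341473650431385022519911078299227448170366987713089658325988770956871711607356677401786000708946669431743181430003461357620893562065048740168340748843883605814490199481063476054015880145575681394769464119161070483602142442943096491198995195369378605076877891082181986083517785009731849233552197316337225337036660159827926345534918666267901814184727852650412395572022929279873061478191455910111733704851335177009428915204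

def pf : ℕ → ℤ × ℤ
  | 0 => (pX0, pY0)
  | n + 1 => (pU * (pf n).1 + 5 ^ 9 * pV * (pf n).2, pV * (pf n).1 + pU * (pf n).2)

lemma hUV : pU ^ 2 - 5 ^ 9 * pV ^ 2 = 1 := by norm_num [pU, pV]

lemma h0 : pX0 ^ 2 - 5 ^ 9 * pY0 ^ 2 = -1 := by norm_num [pX0, pY0]

lemma hUpos : (1 : ℤ) < pU := by norm_num [pU]

lemma hVpos : (0 : ℤ) < pV := by norm_num [pV]

lemma pf_prop : ∀ n : ℕ, (pf n).1 ^ 2 - 5 ^ 9 * (pf n).2 ^ 2 = -1 ∧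
    0 < (pf n).1 ∧ 0 < (pf n).2 := by
  intro n
  induction n with
  | zero =>
    refine ⟨h0, ?_, ?_⟩ <;> norm_num [pf, pX0, pY0]
  | succ n ih =>
    obtain ⟨hn, hx, hy⟩ := ih
    refine ⟨?_, ?_, ?_⟩
    · show (pU * (pf n).1 + 5 ^ 9 * pV * (pf n).2) ^ 2 -
        5 ^ 9 * (pV * (pf n).1 + pU * (pf n).2) ^ 2 = -1
      linear_combination ((pf n).1 ^ 2 - 5 ^ 9 * (pf n).2 ^ 2) * hUV + hn
    · show 0 < pU * (pf n).1 + 5 ^ 9 * pV * (pf n).2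
      have := hUpos; have := hVpos; positivity
    · show 0 < pV * (pf n).1 + pU * (pf n).2
      have := hUpos; have := hVpos; positivity

lemma pf_mono : StrictMono (fun n => (pf n).2) := by
  apply strictMono_nat_of_lt_succ
  intro n
  obtain ⟨_, hx, hy⟩ := pf_prop n
  show (pf n).2 < pV * (pf n).1 + pU * (pf n).2
  have h1 : 1 ≤ pV * (pf n).1 := by nlinarith [hVpos, hx]
  nlinarith [hUpos, hy]

/-- The equation `x² - 5⁹·y² = -1` has infinitely many integer solutions. -/
theorem pell_five_ninth_infinitely_many_solutions :
    {p : ℤ × ℤ | p.1 ^ 2 - 5 ^ 9 * p.2 ^ 2 = -1}.Infinite := by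
  apply Set.infinite_of_injective_forall_mem (f := pf)
  case hi => exact fun a b hab => pf_mono.injective (congrArg Prod.snd hab)
  case hf => exact fun n => (pf_prop n).1
end

section
/- If (u, v) is the pair of positive integers solving u² − 5⁹·v² = −1 with u minimal among all positive integer solutions, then u² + 1 > 2^(2^11), i.e. u² + 1 > 2^2048. -/
/-!
Put `y = 625 v`, so that `u² - 5 y² = -1`. The positive solutions of `x² - 5 y² = -1` are the
numbers `x + y √5 = (2 + √5) (9 + 4 √5)ᵏ`, i.e. the orbit of `(2, 1)` under the linear map
`(x, y) ↦ (9 x + 20 y, 4 x + 9 y)`: dividing by `9 + 4 √5` takes a solution with `y > 1` to one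
with smaller positive `y`. Modulo `625` the second coordinate of the orbit first vanishes at
`k = 312`, and along the orbit `x` grows at least by a factor `16` per step, so
`u ≥ 2 · 16³¹² > 2¹⁰²⁴`.
-/

section PellStep

variable {R S : Type*}

/-- Multiplication by `9 + 4 √5` on `x + y √5`. -/
def pellStep [Semiring R] (p : R × R) : R × R := (9 * p.1 + 20 * p.2, 4 * p.1 + 9 * p.2)

def pellStepInv [Ring R] (p : R × R) : R × R := (9 * p.1 - 20 * p.2, 9 * p.2 - 4 * p.1)

theorem pellStep_pellStepInv [CommRing R] (p : R × R) : pellStep (pellStepInv p) = p := by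
  simp only [pellStep, pellStepInv]
  ext <;> ring

theorem pellStep_semiconj [Semiring R] [Semiring S] (f : R →+* S) :
    Function.Semiconj (Prod.map f f) pellStep pellStep := fun p => by
  simp only [pellStep, Prod.map_apply, Prod.map_fst, Prod.map_snd, map_add, map_mul, map_ofNat]

theorem map_iterate_pellStep [Semiring R] [Semiring S] (f : R →+* S) (k : ℕ) (p : R × R) :
    Prod.map f f (pellStep^[k] p) = pellStep^[k] (Prod.map f f p) :=
  (pellStep_semiconj f).iterate_right k p

end PellStep

def IsPosPellSol (p : ℤ × ℤ) : Prop := 0 < p.1 ∧ 0 < p.2 ∧ p.1 ^ 2 - 5 * p.2 ^ 2 = -1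

namespace IsPosPellSol

variable {p : ℤ × ℤ}

theorem map_pellStep (hp : IsPosPellSol p) : IsPosPellSol (pellStep p) := by
  obtain ⟨hx, hy, hnorm⟩ := hp
  exact ⟨by simp only [pellStep]; positivity, by simp only [pellStep]; positivity,
    by simp only [pellStep]; linear_combination hnorm⟩

theorem iterate_pellStep (hp : IsPosPellSol p) (k : ℕ) : IsPosPellSol (pellStep^[k] p) := by
  induction k with
  | zero => exact hp
  | succ k ih => simpa only [Function.iterate_succ_apply'] using ih.map_pellStep

theorem sixteen_mul_le_pellStep_fst (hp : IsPosPellSol p) : 16 * p.1 ≤ (pellStep p).1 := by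
  obtain ⟨hx, hy, hnorm⟩ := hp
  have : 7 * p.1 < 20 * p.2 := by nlinarith
  simp only [pellStep]
  linarith

theorem sixteen_pow_mul_le_iterate_fst (hp : IsPosPellSol p) (k : ℕ) :
    16 ^ k * p.1 ≤ (pellStep^[k] p).1 := by
  induction k with
  | zero => simp
  | succ k ih =>
    rw [Function.iterate_succ_apply', pow_succ', mul_assoc]
    exact ((mul_le_mul_iff_right₀ (by norm_num)).2 ih).trans
      (hp.iterate_pellStep k).sixteen_mul_le_pellStep_fst

theorem pellStepInv_of_one_lt (hp : IsPosPellSol p) (h1 : 1 < p.2) :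
    IsPosPellSol (pellStepInv p) ∧ (pellStepInv p).2 < p.2 := by
  obtain ⟨hx, hy, hnorm⟩ := hp
  simp only [pellStepInv]
  have hnorm' : (9 * p.1 - 20 * p.2) ^ 2 - 5 * (9 * p.2 - 4 * p.1) ^ 2 = -1 := by
    linear_combination hnorm
  have hy' : 0 < 9 * p.2 - 4 * p.1 := by nlinarith
  -- `x' ≤ -2` would force `y' = 1`, hence `(x, y) = (2, 1)`.
  have hx' : 0 < 9 * p.1 - 20 * p.2 := by
    by_contra! hc
    have : 2 ≤ 20 * p.2 - 9 * p.1 := by nlinarith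
    nlinarith
  exact ⟨⟨hx', hy', hnorm'⟩, by nlinarith⟩

theorem eq_two_one_of_snd_eq_one (hp : IsPosPellSol p) (h1 : p.2 = 1) : p = (2, 1) := by
  obtain ⟨hx, -, hnorm⟩ := hp
  have : (p.1 - 2) * (p.1 + 2) = 0 := by rw [h1] at hnorm; linear_combination hnorm
  rcases mul_eq_zero.1 this with h | h
  · ext
    · linarith
    · exact h1
  · linarith

theorem exists_iterate_eq (hp : IsPosPellSol p) : ∃ k : ℕ, pellStep^[k] (2, 1) = p := by
  obtain ⟨n, hn⟩ : ∃ n : ℕ, p.2 = n := ⟨p.2.toNat, (Int.toNat_of_nonneg hp.2.1.le).symm⟩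
  induction n using Nat.strong_induction_on generalizing p with
  | _ n ih =>
    rcases (show 1 ≤ p.2 from hp.2.1).eq_or_lt with h1 | h1
    · exact ⟨0, (hp.eq_two_one_of_snd_eq_one h1.symm).symm⟩
    · obtain ⟨hd, hlt⟩ := hp.pellStepInv_of_one_lt h1
      obtain ⟨k, hk⟩ := ih _ (by omega) hd (Int.toNat_of_nonneg hd.2.1.le).symm
      exact ⟨k + 1, by rw [Function.iterate_succ_apply', hk, pellStep_pellStepInv]⟩

end IsPosPellSol

set_option maxRecDepth 100000 in
theorem iterate_pellStep_snd_ne_zero_zmod :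
    ∀ k < 312, (pellStep^[k] ((2, 1) : ZMod 625 × ZMod 625)).2 ≠ 0 := by
  decide

theorem le_of_dvd_snd_iterate_pellStep {k : ℕ}
    (h : 625 ∣ (pellStep^[k] ((2, 1) : ℤ × ℤ)).2) : 312 ≤ k := by
  by_contra! hk
  apply iterate_pellStep_snd_ne_zero_zmod k hk
  have := congrArg Prod.snd (map_iterate_pellStep (Int.castRingHom (ZMod 625)) k (2, 1))
  simp only [Prod.map_apply, Prod.map_snd, map_ofNat, map_one] at this
  rwa [← this, eq_intCast, ZMod.intCast_zmod_eq_zero_iff_dvd]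

theorem pell_five_ninth_minimal_solution_large_general (u v : ℤ) (hu : 0 < u) (hv : 0 < v)
    (h : u ^ 2 - 5 ^ 9 * v ^ 2 = -1) :
    (2 : ℤ) ^ 2048 < u ^ 2 + 1 := by
  have hsol : IsPosPellSol (u, 625 * v) := ⟨hu, by positivity, by linear_combination h⟩
  obtain ⟨k, hk⟩ := hsol.exists_iterate_eq
  have hk312 : 312 ≤ k := le_of_dvd_snd_iterate_pellStep (by rw [hk]; exact dvd_mul_right 625 v)
  have hgrowth : 16 ^ k * 2 ≤ u := by
    have h21 : IsPosPellSol (2, 1) := by norm_num [IsPosPellSol]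
    simpa [hk] using h21.sixteen_pow_mul_le_iterate_fst k
  have hu_large : (2 : ℤ) ^ 1024 < u :=
    calc (2 : ℤ) ^ 1024 < 2 ^ (4 * 312 + 1) := pow_lt_pow_right₀ (by norm_num) (by norm_num)
      _ = 16 ^ 312 * 2 := by rw [pow_succ, pow_mul]; norm_num
      _ ≤ 16 ^ k * 2 := by gcongr; norm_num
      _ ≤ u := hgrowth
  calc (2 : ℤ) ^ 2048 = (2 ^ 1024) ^ 2 := by rw [← pow_mul]
    _ < u ^ 2 := by gcongr
    _ < u ^ 2 + 1 := lt_add_one _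

/-- If `(u, v)` is the positive integer solution of `u² - 5⁹·v² = -1` with `u` minimal,
then `u² + 1 > 2^2048`. -/
theorem pell_five_ninth_minimal_solution_large (u v : ℤ) (hu : 0 < u) (hv : 0 < v)
    (h : u ^ 2 - 5 ^ 9 * v ^ 2 = -1)
    (hmin : ∀ u' v' : ℤ, 0 < u' → 0 < v' → u' ^ 2 - 5 ^ 9 * v' ^ 2 = -1 → u ≤ u') :
    (2 : ℤ) ^ 2048 < u ^ 2 + 1 :=
  pell_five_ninth_minimal_solution_large_general u v hu hv h
end
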